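/- Let ℂ and 𝔾 be stratified L-convex structures on X and Y respectively and f : X → Y. Then f is L-convexity-preserving (i.e., f←(A) ∈ ℂ for all A ∈ 𝔾) if and only if for every x ∈ X, every nonzero coprime a ∈ L, and every A : Y → L with A in the L-convex remote-neighborhood system of (f x)_a, the preimage f←(A) lies in the L-convex remote-neighborhood system of x_a. -/

import Mathlib

open scoped Classical

variable {L X Y : Type*}

def IsLConvex [CompleteLattice L] (𝒞 : Set (X → L)) : Prop :=
  (fun _ => (⊤ : L)) ∈ 𝒞 ∧ (fun _ => (⊥ : L)) ∈ 𝒞 ∧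
  (∀ S : Set (X → L), S ⊆ 𝒞 → sInf S ∈ 𝒞) ∧
  (∀ S : Set (X → L), S ⊆ 𝒞 → DirectedOn (· ≤ ·) S → sSup S ∈ 𝒞)

def IsStratified [CompleteLattice L] (𝒞 : Set (X → L)) : Prop :=
  ∀ a : L, (fun _ => a) ∈ 𝒞

def LCP [CompleteLattice L] (f : X → Y) (𝒞 : Set (X → L)) (𝔾 : Set (Y → L)) : Prop :=
  ∀ A ∈ 𝔾, (A ∘ f) ∈ 𝒞

noncomputable def fpoint [CompleteLattice L] (x : X) (a : L) : X → L :=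
  fun u => if u = x then a else ⊥

/-- The L-convex remote-neighborhood system of the point `x_a`, for involution `c`. -/
def RN [CompleteLattice L] (𝒞 : Set (X → L)) (c : L → L) (x : X) (a : L) : Set (X → L) :=
  {A | ∃ C ∈ 𝒞, fpoint x a ≤ (fun u => c (C u)) ∧ (fun u => c (C u)) ≤ (fun u => c (A u))}

/-- nonzero coprime element -/
def IsCoprimeElt [CompleteLattice L] (a : L) : Prop :=
  a ≠ ⊥ ∧ ∀ b c : L, a ≤ b ⊔ c → a ≤ b ∨ a ≤ c

/-! An antitone involution turns `A ∈ R_{x_a}` into: some `C ∈ ℂ` lies above `A` with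
`C x ≤ a'`, so the forward direction just pulls `C` back along `f`. Conversely `A ∘ f` is the
infimum of the members of `ℂ` above it. In a completely distributive lattice every element is the
join of the coprimes below it, so this is tested at coprimes `a ≤ (A (f x))'`, where the hypothesis
for `A ∈ R_{(f x)_a}` supplies a member `C ≥ A ∘ f` of `ℂ` with `C x ≤ a'`.

The coprimes come from the argument that continuous frames are spatial: a sequence of elements,
each totally above the previous one, generates an ideal `I` whose complement is closed under
infima, and the least element of `Iᶜ` is coprime. -/

section CoprimeElt

/-- Dual of Raney's "totally below" relation. -/
def TotallyAbove [CompleteLattice L] (w v : L) : Prop :=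
  ∀ S : Set L, sInf S ≤ v → ∃ s ∈ S, s ≤ w

lemma TotallyAbove.le [CompleteLattice L] {w v : L} (h : TotallyAbove w v) : v ≤ w := by
  obtain ⟨s, rfl, hs⟩ := h {v} (by simp)
  exact hs

lemma isCoprimeElt_sInf_compl [Order.Frame L] {I : Set L} (hbot : ⊥ ∈ I)
    (hsup : ∀ s ∈ I, ∀ t ∈ I, s ⊔ t ∈ I) (hI : sInf Iᶜ ∉ I) : IsCoprimeElt (sInf Iᶜ) := by
  refine ⟨fun h => hI (h ▸ hbot), fun s t hst => ?_⟩
  by_contra! ⟨hs, ht⟩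
  have hinf : ∀ r, ¬ sInf Iᶜ ≤ r → sInf Iᶜ ⊓ r ∈ I := fun r hr =>
    by_contra fun hrI => hr ((sInf_le hrI).trans inf_le_right)
  apply hI
  rw [← inf_eq_left.2 hst, inf_sup_left]
  exact hsup _ (hinf s hs) _ (hinf t ht)

variable [CompletelyDistribLattice L]

lemma sInf_totallyAbove_le (v : L) : sInf {w | TotallyAbove w v} ≤ v := by
  have htot : ∀ g : ∀ S : {S : Set L // sInf S ≤ v}, S.1, TotallyAbove (⨆ S, (g S : L)) v :=
    fun g T hT => ⟨g ⟨T, hT⟩, (g ⟨T, hT⟩).2, le_iSup (fun S => (g S : L)) ⟨T, hT⟩⟩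
  calc sInf {w | TotallyAbove w v}
      ≤ ⨅ g : ∀ S : {S : Set L // sInf S ≤ v}, S.1, ⨆ S, (g S : L) :=
        le_iInf fun g => sInf_le (htot g)
    _ = ⨆ S : {S : Set L // sInf S ≤ v}, ⨅ s : S.1, (s : L) := iSup_iInf_eq.symm
    _ ≤ v := iSup_le fun S => (sInf_eq_iInf' S.1).symm.le.trans S.2

lemma exists_totallyAbove_not_le {u v : L} (h : ¬ u ≤ v) :
    ∃ w, TotallyAbove w v ∧ ¬ u ≤ w := by
  by_contra! hc
  exact h ((le_sInf hc).trans (sInf_totallyAbove_le v))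

lemma exists_totallyAbove_seq {u v : L} (h : ¬ u ≤ v) :
    ∃ W : ℕ → L, W 0 = v ∧ (∀ n, TotallyAbove (W (n + 1)) (W n)) ∧ ∀ n, ¬ u ≤ W n := by
  choose! g hgT hgu using fun t (ht : ¬ u ≤ t) => exists_totallyAbove_not_le ht
  have hW : ∀ n, ¬ u ≤ g^[n] v := fun n => by
    induction n with
    | zero => exact h
    | succ n ih => rw [Function.iterate_succ_apply']; exact hgu _ ih
  refine ⟨fun n => g^[n] v, rfl, fun n => ?_, hW⟩
  simpa only [Function.iterate_succ_apply'] using hgT _ (hW n)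

lemma exists_isCoprimeElt_le_not_le {u v : L} (h : ¬ u ≤ v) :
    ∃ p, IsCoprimeElt p ∧ p ≤ u ∧ ¬ p ≤ v := by
  obtain ⟨W, hW0, hWT, hWu⟩ := exists_totallyAbove_seq h
  have hmono : Monotone W := monotone_nat_of_le_succ fun n => (hWT n).le
  set I : Set L := {z | ∃ n, z ≤ W n}
  have hpI : sInf Iᶜ ∉ I := by
    rintro ⟨n, hn⟩
    obtain ⟨s, hs, hsW⟩ := hWT n _ hn
    exact hs ⟨n + 1, hsW⟩
  have hsup : ∀ s ∈ I, ∀ t ∈ I, s ⊔ t ∈ I := by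
    rintro s ⟨m, hm⟩ t ⟨n, hn⟩
    exact ⟨max m n, sup_le (hm.trans (hmono (le_max_left m n)))
      (hn.trans (hmono (le_max_right m n)))⟩
  refine ⟨sInf Iᶜ, isCoprimeElt_sInf_compl ⟨0, bot_le⟩ hsup hpI,
    sInf_le fun ⟨n, hn⟩ => hWu n hn, fun hpv => hpI ⟨0, hW0 ▸ hpv⟩⟩

lemma le_of_forall_isCoprimeElt_le {u v : L}
    (h : ∀ p : L, IsCoprimeElt p → p ≤ u → p ≤ v) : u ≤ v := by
  by_contra huv
  obtain ⟨p, hp, hpu, hpv⟩ := exists_isCoprimeElt_le_not_le huv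
  exact hpv (h p hp hpu)

end CoprimeElt

section RemoteNeighborhood

variable {c : L → L}

lemma le_iff_of_antitone_involutive [Preorder L] (hcA : Antitone c)
    (hci : Function.Involutive c) {a b : L} : c a ≤ c b ↔ b ≤ a :=
  ⟨fun h => hci a ▸ hci b ▸ hcA h, fun h => hcA h⟩

lemma fpoint_le_iff [CompleteLattice L] {x : X} {a : L} {g : X → L} :
    fpoint x a ≤ g ↔ a ≤ g x := by
  refine ⟨fun h => by simpa [fpoint] using h x, fun h u => ?_⟩
  by_cases hu : u = x
  · subst hu; simpa [fpoint] using h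
  · simp [fpoint, hu]

lemma mem_RN_iff [CompleteLattice L] (hcA : Antitone c) (hci : Function.Involutive c)
    {𝒞 : Set (X → L)} {x : X} {a : L} {A : X → L} :
    A ∈ RN 𝒞 c x a ↔ ∃ C ∈ 𝒞, a ≤ c (C x) ∧ A ≤ C := by
  refine exists_congr fun C => and_congr_right fun _ => and_congr fpoint_le_iff ?_
  exact forall_congr' fun u => le_iff_of_antitone_involutive hcA hci

lemma mem_of_forall_mem_RN [CompletelyDistribLattice L]
    (hcA : Antitone c) (hci : Function.Involutive c) {𝒞 : Set (X → L)}
    (h𝒞 : ∀ S ⊆ 𝒞, sInf S ∈ 𝒞) {B : X → L}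
    (hB : ∀ x a, IsCoprimeElt a → a ≤ c (B x) → B ∈ RN 𝒞 c x a) : B ∈ 𝒞 := by
  set S := {D | D ∈ 𝒞 ∧ B ≤ D}
  have hSB : sInf S ≤ B := fun x => by
    rw [← le_iff_of_antitone_involutive hcA hci]
    refine le_of_forall_isCoprimeElt_le fun p hp hpB => ?_
    obtain ⟨D, hD, hpD, hBD⟩ := (mem_RN_iff hcA hci).1 (hB x p hp hpB)
    exact hpD.trans (hcA ((sInf_le (show D ∈ S from ⟨hD, hBD⟩) : sInf S ≤ D) x))
  rw [le_antisymm (le_sInf fun D hD => hD.2) hSB]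
  exact h𝒞 S fun D hD => hD.1

end RemoteNeighborhood

theorem lcp_iff_remote_general [CompletelyDistribLattice L] (c : L → L)
    (hcA : Antitone c) (hci : Function.Involutive c)
    (f : X → Y) (𝒞 : Set (X → L)) (𝔾 : Set (Y → L))
    (h𝒞 : IsLConvex 𝒞) :
    LCP f 𝒞 𝔾 ↔
      ∀ (x : X) (a : L), IsCoprimeElt a →
        ∀ A ∈ RN 𝔾 c (f x) a, (A ∘ f) ∈ RN 𝒞 c x a := by
  constructor
  · intro hf x a _ A hA
    obtain ⟨C, hC, haC, hAC⟩ := (mem_RN_iff hcA hci).1 hA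
    exact (mem_RN_iff hcA hci).2 ⟨C ∘ f, hf C hC, haC, fun u => hAC (f u)⟩
  · intro h A hA
    refine mem_of_forall_mem_RN hcA hci h𝒞.2.2.1 fun x a ha hax => h x a ha A ?_
    exact (mem_RN_iff hcA hci).2 ⟨A, hA, hax, le_rfl⟩

theorem lcp_iff_remote [CompletelyDistribLattice L] (c : L → L)
    (hcA : Antitone c) (hci : Function.Involutive c)
    (f : X → Y) (𝒞 : Set (X → L)) (𝔾 : Set (Y → L))
    (h𝒞 : IsLConvex 𝒞) (hs𝒞 : IsStratified 𝒞)
    (h𝔾 : IsLConvex 𝔾) (hs𝔾 : IsStratified 𝔾) :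
    LCP f 𝒞 𝔾 ↔
      ∀ (x : X) (a : L), IsCoprimeElt a →
        ∀ A ∈ RN 𝔾 c (f x) a, (A ∘ f) ∈ RN 𝒞 c x a :=
  lcp_iff_remote_general c hcA hci f 𝒞 𝔾 h𝒞
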